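/- (Soundness of the rewrite rule ElimEq.) For any array t : I → V, any vector of indices ī : Fin m → I, and any predicate φ : (I → V) → Prop, there exists an array a : I → V satisfying the partial equality a =_{range ī} t together with φ a, if and only if there exists a vector of values v̄ : Fin m → V such that φ (wr(t, ī, v̄)). -/
import Mathlib


/-- Partial equality of arrays modulo a set of indices: `a` and `b` agree
outside `s`. -/
def peq {I V : Type*} (s : Set I) (a b : I → V) : Prop :=
  ∀ j, j ∉ s → a j = b j

/-- Iterated write: update `a` at indices `i k` with values `v k`
successively for `k = 0, 1, …, m-1` (later writes overwrite earlier ones). -/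
def iwr {I V : Type*} [DecidableEq I] :
    {m : ℕ} → (I → V) → (Fin m → I) → (Fin m → V) → (I → V)
  | 0, a, _, _ => a
  | m + 1, a, i, v =>
      Function.update (iwr a (fun k => i k.castSucc) (fun k => v k.castSucc))
        (i (Fin.last m)) (v (Fin.last m))

theorem iwr_notin {I V : Type*} [DecidableEq I] :
    ∀ {m : ℕ} (t : I → V) (i : Fin m → I) (v : Fin m → V) (j : I),
      j ∉ Set.range i → iwr t i v j = t j := by
  intro m
  induction m with
  | zero => intro t i v j _; rfl
  | succ m ih =>
      intro t i v j hj
      have hne : j ≠ i (Fin.last m) := fun h => hj ⟨Fin.last m, h.symm⟩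
      have : iwr t i v j =
          iwr t (fun k => i k.castSucc) (fun k => v k.castSucc) j := by
        simp [iwr, Function.update, hne]
      rw [this, ih]
      rintro ⟨k, rfl⟩
      exact hj ⟨k.castSucc, rfl⟩

theorem iwr_eq {I V : Type*} [DecidableEq I] :
    ∀ {m : ℕ} (t : I → V) (i : Fin m → I) (a : I → V) (j : I),
      (j ∉ Set.range i → a j = t j) → iwr t i (fun k => a (i k)) j = a j := by
  intro m
  induction m with
  | zero =>
      intro t i a j h
      exact (h (by rintro ⟨k, _⟩; exact k.elim0)).symm
  | succ m ih =>
      intro t i a j h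
      by_cases hj : j = i (Fin.last m)
      · subst hj; simp [iwr]
      · have : iwr t i (fun k => a (i k)) j =
            iwr t (fun k => i k.castSucc) (fun k => a (i k.castSucc)) j := by
          simp [iwr, Function.update, hj]
        rw [this, ih t (fun k => i k.castSucc) a j]
        rintro hr
        apply h
        rintro ⟨k, rfl⟩
        rcases Fin.eq_castSucc_or_eq_last k with ⟨k', rfl⟩ | rfl
        · exact hr ⟨k', rfl⟩
        · exact hj rfl

/-- Soundness of the rewrite rule ElimEq:
`(∃ a, a =_{range ī} t ∧ φ a) ↔ ∃ v̄, φ(wr(t, ī, v̄))`. -/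
theorem stmt_5 {I V : Type*} [DecidableEq I] {m : ℕ} (t : I → V)
    (i : Fin m → I) (φ : (I → V) → Prop) :
    (∃ a : I → V, peq (Set.range i) a t ∧ φ a) ↔
      ∃ v : Fin m → V, φ (iwr t i v) := by
  constructor
  · rintro ⟨a, hpeq, hφ⟩
    refine ⟨fun k => a (i k), ?_⟩
    have : iwr t i (fun k => a (i k)) = a :=
      funext fun j => iwr_eq t i a j (hpeq j)
    rwa [this]
  · rintro ⟨v, hφ⟩
    exact ⟨iwr t i v, fun j hj => iwr_notin t i v j hj, hφ⟩
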